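/- With the recursive random weights β_{j,n} as above, if S(γ) = E[L^γ + R^γ] − 1 < 0 for some γ > 0, then the maximum weight β_{(n)} := max_{1≤j≤n} β_{j,n} converges to 0 in probability as n → ∞. -/

import Mathlib

open MeasureTheory ProbabilityTheory

/-- The recursive random weights `β_{j,n}` of McKean trees: `kacWeight L R I n j ω`
is the weight `β_{j,n}(ω)` (for `1 ≤ j ≤ n`), built by splitting the `I_n`-th weight
into `(L_n β_{I_n,n}, R_n β_{I_n,n})`. -/
noncomputable def kacWeight {Ω : Type*} (L R : ℕ → Ω → ℝ) (I : ℕ → Ω → ℕ) :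
    ℕ → ℕ → Ω → ℝ
  | 0, _, _ => 0
  | 1, j, _ => if j = 1 then 1 else 0
  | (n + 2), j, ω =>
      if j < I (n + 1) ω then kacWeight L R I (n + 1) j ω
      else if j = I (n + 1) ω then L (n + 1) ω * kacWeight L R I (n + 1) j ω
      else if j = I (n + 1) ω + 1 then R (n + 1) ω * kacWeight L R I (n + 1) (j - 1) ω
      else kacWeight L R I (n + 1) (j - 1) ω

/-- `M_n^{(s)} = Σ_{j=1}^n β_{j,n}^s`. -/
noncomputable def kacM {Ω : Type*} (L R : ℕ → Ω → ℝ) (I : ℕ → Ω → ℕ)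
    (s : ℝ) (n : ℕ) (ω : Ω) : ℝ :=
  ∑ j ∈ Finset.Icc 1 n, kacWeight L R I n j ω ^ s

/-- Joint family encoding the coefficient pairs `(L_n, R_n)` and the indices `I_n`
as one indexed family of random vectors, used to state their mutual independence. -/
noncomputable def kacFamily {Ω : Type*} (L R : ℕ → Ω → ℝ) (I : ℕ → Ω → ℕ) :
    ℕ ⊕ ℕ → Ω → ℝ × ℝ :=
  Sum.elim (fun n ω => (L n ω, R n ω)) (fun n ω => ((I n ω : ℝ), 0))

/-!
Put `M_n = ∑_{j ≤ n} β_{j,n}^γ`. Splitting the `I_n`-th weight changes `M_n` by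
`(L_n^γ + R_n^γ - 1) β_{I_n,n}^γ`; since `I_n` is uniform on `{1, …, n}` and independent of
`(L_n, R_n)` and of the weights at time `n`, this gives `E M_{n+1} = (1 - c / n) E M_n` with
`c = 1 - E[L^γ + R^γ] > 0`. Hence `E M_n ≤ exp (-c H_{n-1}) → 0`, and Markov's inequality for
`β_{(n)}^γ ≤ M_n` gives `P(β_{(n)} > ε) ≤ ε^{-γ} E M_n → 0`.
-/

open Filter Finset Topology

theorem ProbabilityTheory.iIndepFun.indepFun_comp_of_dependsOn {Ω ι β γ₁ γ₂ : Type*}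
    [MeasurableSpace Ω] {μ : Measure Ω} [MeasurableSpace β] [Nonempty β]
    [MeasurableSpace γ₁] [MeasurableSpace γ₂] {X : ι → Ω → β}
    (hX : iIndepFun X μ) (hXm : ∀ i, Measurable (X i)) {S T : Finset ι} (hST : Disjoint S T)
    {F : (ι → β) → γ₁} {G : (ι → β) → γ₂} (hFm : Measurable F) (hGm : Measurable G)
    (hF : DependsOn F S) (hG : DependsOn G T) :
    IndepFun (fun ω ↦ F (X · ω)) (fun ω ↦ G (X · ω)) μ := by
  classical
  let x₀ : ι → β := fun _ ↦ Classical.arbitrary β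
  have hFS : (fun ω ↦ F (X · ω)) = (F ∘ Function.updateFinset x₀ S) ∘ fun ω (i : S) ↦ X i ω :=
    funext fun ω ↦ hF fun i hi ↦ by simp [Function.updateFinset, Finset.mem_coe.mp hi]
  have hGT : (fun ω ↦ G (X · ω)) = (G ∘ Function.updateFinset x₀ T) ∘ fun ω (i : T) ↦ X i ω :=
    funext fun ω ↦ hG fun i hi ↦ by simp [Function.updateFinset, Finset.mem_coe.mp hi]
  rw [hFS, hGT]
  exact (hX.indepFun_finset S T hST hXm).comp (hFm.comp measurable_updateFinset)
    (hGm.comp measurable_updateFinset)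

theorem tendsto_zero_of_le_one_sub_div_mul {a : ℕ → ℝ} {c : ℝ} (hc : 0 < c)
    (ha : ∀ k, 0 ≤ a k) (hrec : ∀ k : ℕ, a (k + 1) ≤ (1 - c / (k + 1)) * a k) :
    Tendsto a atTop (𝓝 0) := by
  -- `1 - x ≤ exp (-x)`, and the harmonic sums diverge.
  have hbound : ∀ k, a k ≤ a 0 * Real.exp (-c * ∑ i ∈ range k, 1 / (i + 1 : ℝ)) := by
    intro k
    induction k with
    | zero => simp
    | succ k ih =>
      calc a (k + 1) ≤ (1 - c / (k + 1)) * a k := hrec k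
        _ ≤ Real.exp (-(c / (k + 1))) * (a 0 * Real.exp (-c * ∑ i ∈ range k, 1 / (i + 1 : ℝ))) :=
          mul_le_mul (by linarith [Real.add_one_le_exp (-(c / (k + 1)))]) ih (ha k)
            (Real.exp_pos _).le
        _ = a 0 * Real.exp (-c * ∑ i ∈ range (k + 1), 1 / (i + 1 : ℝ)) := by
          rw [mul_left_comm, ← Real.exp_add, sum_range_succ]
          ring_nf
  have hharmonic :=
    tendsto_neg_atBot_iff.mpr (Real.tendsto_sum_range_one_div_nat_succ_atTop.const_mul_atTop hc)
  have hexp := (Real.tendsto_exp_atBot.comp hharmonic).const_mul (a 0)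
  simp only [mul_zero] at hexp
  exact squeeze_zero ha hbound (by simpa [Function.comp_def, neg_mul] using hexp)

def splitAt (a : ℕ → ℝ) (i : ℕ) (l r : ℝ) (j : ℕ) : ℝ :=
  if j < i then a j
  else if j = i then l * a j
  else if j = i + 1 then r * a (j - 1)
  else a (j - 1)

theorem splitAt_nonneg {a : ℕ → ℝ} (ha : ∀ j, 0 ≤ a j) (i : ℕ) {l r : ℝ} (hl : 0 ≤ l)
    (hr : 0 ≤ r) (j : ℕ) : 0 ≤ splitAt a i l r j := by
  unfold splitAt
  split_ifs <;> first | exact ha _ | exact mul_nonneg ‹_› (ha _)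

theorem splitAt_rpow {a : ℕ → ℝ} (ha : ∀ j, 0 ≤ a j) (i : ℕ) {l r : ℝ} (hl : 0 ≤ l)
    (hr : 0 ≤ r) (γ : ℝ) (j : ℕ) :
    splitAt a i l r j ^ γ = splitAt (a · ^ γ) i (l ^ γ) (r ^ γ) j := by
  unfold splitAt
  split_ifs <;> first | rfl | exact Real.mul_rpow ‹_› (ha _)

theorem sum_Icc_splitAt (a : ℕ → ℝ) (l r : ℝ) {i n : ℕ} (hi : i ∈ Icc 1 n) :
    ∑ j ∈ Icc 1 (n + 1), splitAt a i l r j = ∑ j ∈ Icc 1 n, a j + (l + r - 1) * a i := by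
  rw [mem_Icc] at hi
  obtain ⟨hi1, hin⟩ := hi
  induction n, hin using Nat.le_induction with
  | base =>
    obtain ⟨k, rfl⟩ : ∃ k, i = k + 1 := ⟨i - 1, by omega⟩
    have hlow : ∑ j ∈ Icc 1 k, splitAt a (k + 1) l r j = ∑ j ∈ Icc 1 k, a j :=
      sum_congr rfl fun j hj ↦ if_pos (by grind)
    rw [sum_Icc_succ_top (by omega), sum_Icc_succ_top (by omega), sum_Icc_succ_top (by omega),
      hlow]
    simp only [splitAt, lt_irrefl, if_false, if_true, add_lt_iff_neg_left, not_lt_zero,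
      add_eq_left, one_ne_zero, Nat.add_sub_cancel]
    ring
  | succ n hin ih =>
    rw [sum_Icc_succ_top (by omega), ih, sum_Icc_succ_top (by omega)]
    have h1 : ¬ n + 1 + 1 < i := by omega
    have h2 : n + 1 + 1 ≠ i := by omega
    have h3 : n + 1 + 1 ≠ i + 1 := by omega
    simp only [splitAt, h1, h2, h3, if_false, Nat.add_sub_cancel]
    ring

/-- `kacWeight` as a function of the values `x i = kacFamily L R I i ω` of the joint family
(`I_m` is read back as `⌊(x (inr m)).1⌋₊`), so that independence from other coordinates of the
family can be read off from `familyWeight_dependsOn`. -/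
noncomputable def familyWeight (x : ℕ ⊕ ℕ → ℝ × ℝ) : ℕ → ℕ → ℝ
  | 0, _ => 0
  | 1, j => if j = 1 then 1 else 0
  | n + 2, j => splitAt (familyWeight x (n + 1)) ⌊(x (.inr (n + 1))).1⌋₊
      (x (.inl (n + 1))).1 (x (.inl (n + 1))).2 j

theorem measurable_familyWeight (n j : ℕ) : Measurable fun x ↦ familyWeight x n j := by
  induction n using Nat.strong_induction_on generalizing j with
  | _ n ih =>
    match n with
    | 0 => exact measurable_const
    | 1 => exact measurable_const
    | n + 2 =>
      simp only [familyWeight, splitAt]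
      have hi : Measurable fun x : ℕ ⊕ ℕ → ℝ × ℝ ↦ ⌊(x (.inr (n + 1))).1⌋₊ := by fun_prop
      have hl : Measurable fun x : ℕ ⊕ ℕ → ℝ × ℝ ↦ (x (.inl (n + 1))).1 := by fun_prop
      have hr : Measurable fun x : ℕ ⊕ ℕ → ℝ × ℝ ↦ (x (.inl (n + 1))).2 := by fun_prop
      have ih' := ih (n + 1) (by omega)
      refine Measurable.ite (hi measurableSet_Ioi) (ih' j) ?_
      refine Measurable.ite (hi (measurableSet_singleton j)) (hl.mul (ih' j)) ?_
      exact Measurable.ite (measurableSet_eq_fun measurable_const (hi.add_const 1))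
        (hr.mul (ih' _)) (ih' _)

theorem familyWeight_dependsOn (n j : ℕ) :
    DependsOn (fun x ↦ familyWeight x n j) ((range n).disjSum (range n) : Set (ℕ ⊕ ℕ)) := by
  intro x y hxy
  induction n using Nat.strong_induction_on generalizing j with
  | _ n ih =>
    match n with
    | 0 => rfl
    | 1 => rfl
    | n + 2 =>
      have hmem : ∀ i, i < n + 2 → Sum.inl i ∈ (range (n + 2)).disjSum (range (n + 2)) ∧
          Sum.inr i ∈ (range (n + 2)).disjSum (range (n + 2)) := by simp
      have ih' : ∀ j, familyWeight x (n + 1) j = familyWeight y (n + 1) j := fun j ↦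
        ih (n + 1) (by omega) j fun i hi ↦ hxy i (by
          rcases i with i | i <;> simp_all <;> omega)
      simp only [familyWeight, funext ih', hxy _ (hmem (n + 1) (by omega)).1,
        hxy _ (hmem (n + 1) (by omega)).2]

theorem measurable_ite_floor_eq (n k : ℕ) :
    Measurable fun x : ℕ ⊕ ℕ → ℝ × ℝ ↦ if ⌊(x (.inr n)).1⌋₊ = k then (1 : ℝ) else 0 :=
  Measurable.ite ((by fun_prop : Measurable fun x : ℕ ⊕ ℕ → ℝ × ℝ ↦ ⌊(x (.inr n)).1⌋₊)
    (measurableSet_singleton k)) measurable_const measurable_const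

section KacModel

variable {Ω : Type*} {L R : ℕ → Ω → ℝ} {I : ℕ → Ω → ℕ}

theorem kacWeight_add_two (n j : ℕ) (ω : Ω) :
    kacWeight L R I (n + 2) j ω =
      splitAt (kacWeight L R I (n + 1) · ω) (I (n + 1) ω) (L (n + 1) ω) (R (n + 1) ω) j := by
  rw [kacWeight, splitAt]

theorem kacWeight_eq_familyWeight (n j : ℕ) (ω : Ω) :
    kacWeight L R I n j ω = familyWeight (kacFamily L R I · ω) n j := by
  induction n using Nat.strong_induction_on generalizing j with
  | _ n ih =>
    match n with
    | 0 => rfl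
    | 1 => rfl
    | n + 2 =>
      rw [kacWeight_add_two, familyWeight]
      simp only [kacFamily, Sum.elim_inl, Sum.elim_inr, Nat.floor_natCast,
        ih (n + 1) (by omega)]

theorem kacWeight_nonneg (hL : ∀ n ω, 0 ≤ L n ω) (hR : ∀ n ω, 0 ≤ R n ω) (n j : ℕ) (ω : Ω) :
    0 ≤ kacWeight L R I n j ω := by
  induction n using Nat.strong_induction_on generalizing j with
  | _ n ih =>
    match n with
    | 0 => exact le_rfl
    | 1 => rw [kacWeight]; split_ifs <;> norm_num
    | n + 2 =>
      rw [kacWeight_add_two]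
      exact splitAt_nonneg (fun j ↦ ih (n + 1) (by omega) j) _ (hL _ _) (hR _ _) j

theorem kacM_nonneg (hL : ∀ n ω, 0 ≤ L n ω) (hR : ∀ n ω, 0 ≤ R n ω) (γ : ℝ) (n : ℕ) (ω : Ω) :
    0 ≤ kacM L R I γ n ω :=
  sum_nonneg fun j _ ↦ Real.rpow_nonneg (kacWeight_nonneg hL hR n j ω) γ

theorem rpow_kacWeight_le_kacM (hL : ∀ n ω, 0 ≤ L n ω) (hR : ∀ n ω, 0 ≤ R n ω) (γ : ℝ)
    {n j : ℕ} (hj : j ∈ Icc 1 n) (ω : Ω) : kacWeight L R I n j ω ^ γ ≤ kacM L R I γ n ω :=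
  single_le_sum (f := (kacWeight L R I n · ω ^ γ))
    (fun j _ ↦ Real.rpow_nonneg (kacWeight_nonneg hL hR n j ω) γ) hj

theorem kacM_one (γ : ℝ) (ω : Ω) : kacM L R I γ 1 ω = 1 := by
  simp [kacM, kacWeight]

theorem kacM_succ_of_mem (hL : ∀ n ω, 0 ≤ L n ω) (hR : ∀ n ω, 0 ≤ R n ω) (γ : ℝ) {n : ℕ}
    {ω : Ω} (hI : I n ω ∈ Icc 1 n) :
    kacM L R I γ (n + 1) ω =
      kacM L R I γ n ω + (L n ω ^ γ + R n ω ^ γ - 1) * kacWeight L R I n (I n ω) ω ^ γ := by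
  obtain ⟨n, rfl⟩ : ∃ p, n = p + 1 := ⟨n - 1, by grind⟩
  simp only [kacM, kacWeight_add_two,
    splitAt_rpow (fun j ↦ kacWeight_nonneg hL hR _ j ω) _ (hL _ _) (hR _ _)]
  exact sum_Icc_splitAt _ _ _ hI

variable [MeasurableSpace Ω]

theorem measurable_kacFamily (hLm : ∀ n, Measurable (L n)) (hRm : ∀ n, Measurable (R n))
    (hIm : ∀ n, Measurable (I n)) (i : ℕ ⊕ ℕ) : Measurable (kacFamily L R I i) := by
  rcases i with n | n
  · exact (hLm n).prodMk (hRm n)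
  · exact (measurable_from_top.comp (hIm n)).prodMk measurable_const

theorem measurable_kacWeight (hLm : ∀ n, Measurable (L n)) (hRm : ∀ n, Measurable (R n))
    (hIm : ∀ n, Measurable (I n)) (n j : ℕ) : Measurable (kacWeight L R I n j) := by
  rw [funext (kacWeight_eq_familyWeight n j)]
  exact (measurable_familyWeight n j).comp
    (measurable_pi_lambda _ (measurable_kacFamily hLm hRm hIm))

theorem measurable_kacM (hLm : ∀ n, Measurable (L n)) (hRm : ∀ n, Measurable (R n))
    (hIm : ∀ n, Measurable (I n)) (γ : ℝ) (n : ℕ) : Measurable (kacM L R I γ n) :=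
  Finset.measurable_sum _ fun j _ ↦ (measurable_kacWeight hLm hRm hIm n j).pow_const γ

theorem measurable_index_indicator (hIm : ∀ n, Measurable (I n)) (n k : ℕ) :
    Measurable fun ω ↦ if I n ω = k then (1 : ℝ) else 0 :=
  Measurable.ite (hIm n (measurableSet_singleton k)) measurable_const measurable_const

variable {μ : Measure Ω}

theorem indepFun_index_indicator_coeff (hLm : ∀ n, Measurable (L n))
    (hRm : ∀ n, Measurable (R n)) (hIm : ∀ n, Measurable (I n))
    (hindep : iIndepFun (kacFamily L R I) μ) (γ : ℝ) (n k : ℕ) :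
    IndepFun (fun ω ↦ if I n ω = k then (1 : ℝ) else 0)
      (fun ω ↦ L n ω ^ γ + R n ω ^ γ - 1) μ := by
  have h := hindep.indepFun_comp_of_dependsOn (measurable_kacFamily hLm hRm hIm)
    (S := {.inr n}) (T := {.inl n}) (by simp)
    (F := fun x ↦ if ⌊(x (.inr n)).1⌋₊ = k then (1 : ℝ) else 0)
    (G := fun x ↦ (x (.inl n)).1 ^ γ + (x (.inl n)).2 ^ γ - 1) (measurable_ite_floor_eq n k)
    (by fun_prop)
    (fun x y h ↦ by simp [h (.inr n) (by simp)]) (fun x y h ↦ by simp [h (.inl n) (by simp)])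
  simpa [kacFamily] using h

theorem indepFun_increment_rpow_kacWeight (hLm : ∀ n, Measurable (L n))
    (hRm : ∀ n, Measurable (R n)) (hIm : ∀ n, Measurable (I n))
    (hindep : iIndepFun (kacFamily L R I) μ) (γ : ℝ) (n k j : ℕ) :
    IndepFun (fun ω ↦ (if I n ω = k then (1 : ℝ) else 0) * (L n ω ^ γ + R n ω ^ γ - 1))
      (fun ω ↦ kacWeight L R I n j ω ^ γ) μ := by
  have h := hindep.indepFun_comp_of_dependsOn (measurable_kacFamily hLm hRm hIm)
    (S := {.inl n, .inr n}) (T := (range n).disjSum (range n)) (by simp)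
    (F := fun x ↦ (if ⌊(x (.inr n)).1⌋₊ = k then (1 : ℝ) else 0) *
      ((x (.inl n)).1 ^ γ + (x (.inl n)).2 ^ γ - 1))
    (G := fun x ↦ familyWeight x n j ^ γ) ((measurable_ite_floor_eq n k).mul (by fun_prop))
    ((measurable_familyWeight n j).pow_const γ)
    (fun x y h ↦ by simp [h (.inr n) (by simp), h (.inl n) (by simp)])
    (fun x y h ↦ congrArg (· ^ γ) (familyWeight_dependsOn n j h))
  simpa [kacFamily, kacWeight_eq_familyWeight] using h

theorem identDistrib_coeff (hLm : ∀ n, Measurable (L n)) (hRm : ∀ n, Measurable (R n))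
    (hiid : ∀ n, 1 ≤ n →
      μ.map (fun ω => (L n ω, R n ω)) = μ.map (fun ω => (L 1 ω, R 1 ω)))
    (γ : ℝ) {n : ℕ} (hn : 1 ≤ n) :
    IdentDistrib (fun ω ↦ L n ω ^ γ + R n ω ^ γ) (fun ω ↦ L 1 ω ^ γ + R 1 ω ^ γ) μ μ :=
  IdentDistrib.comp (u := fun p : ℝ × ℝ ↦ p.1 ^ γ + p.2 ^ γ)
    ⟨((hLm n).prodMk (hRm n)).aemeasurable, ((hLm 1).prodMk (hRm 1)).aemeasurable, hiid n hn⟩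
    (by fun_prop)

theorem integral_index_indicator (hIm : ∀ n, Measurable (I n))
    (hunif : ∀ n, 1 ≤ n → ∀ k ∈ Finset.Icc 1 n, μ {ω | I n ω = k} = (n : ENNReal)⁻¹)
    {n k : ℕ} (hk : k ∈ Icc 1 n) :
    ∫ ω, (if I n ω = k then (1 : ℝ) else 0) ∂μ = (n : ℝ)⁻¹ := by
  have hn : 1 ≤ n := (mem_Icc.mp hk).1.trans (mem_Icc.mp hk).2
  have hind : (fun ω ↦ if I n ω = k then (1 : ℝ) else 0) = {ω | I n ω = k}.indicator 1 := by
    ext ω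
    simp [Set.indicator]
  rw [hind, integral_indicator_one (s := {ω | I n ω = k}) (hIm n (measurableSet_singleton k)),
    measureReal_def, hunif n hn k hk, ENNReal.toReal_inv, ENNReal.toReal_natCast]

theorem integrable_rpow_kacWeight (hL : ∀ n ω, 0 ≤ L n ω) (hR : ∀ n ω, 0 ≤ R n ω)
    (hLm : ∀ n, Measurable (L n)) (hRm : ∀ n, Measurable (R n)) (hIm : ∀ n, Measurable (I n))
    {γ : ℝ} {n : ℕ} (hM : Integrable (kacM L R I γ n) μ) {j : ℕ} (hj : j ∈ Icc 1 n) :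
    Integrable (fun ω ↦ kacWeight L R I n j ω ^ γ) μ :=
  hM.mono' ((measurable_kacWeight hLm hRm hIm n j).pow_const γ).aestronglyMeasurable
    (ae_of_all _ fun ω ↦ by
      rw [Real.norm_of_nonneg (Real.rpow_nonneg (kacWeight_nonneg hL hR n j ω) γ)]
      exact rpow_kacWeight_le_kacM hL hR γ hj ω)

variable [IsProbabilityMeasure μ]

theorem ae_index_mem_Icc (hIm : ∀ n, Measurable (I n))
    (hunif : ∀ n, 1 ≤ n → ∀ k ∈ Finset.Icc 1 n, μ {ω | I n ω = k} = (n : ENNReal)⁻¹)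
    {n : ℕ} (hn : 1 ≤ n) : ∀ᵐ ω ∂μ, I n ω ∈ Icc 1 n := by
  have hsum : ∑ k ∈ Icc 1 n, (n : ENNReal)⁻¹ = 1 := by
    rw [sum_const, Nat.card_Icc, nsmul_eq_mul, Nat.add_sub_cancel,
      ENNReal.mul_inv_cancel (by simp; omega) (by simp)]
  rw [ae_iff_measure_eq (p := (I n · ∈ Icc 1 n)) (hIm n (Icc 1 n).measurableSet).nullMeasurableSet,
    measure_univ, ← hsum, ← sum_congr rfl (hunif n hn)]
  exact (sum_measure_preimage_singleton _ fun k _ ↦ hIm n (measurableSet_singleton k)).symm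

theorem integrable_increment (hLm : ∀ n, Measurable (L n)) (hRm : ∀ n, Measurable (R n))
    (hIm : ∀ n, Measurable (I n))
    (hiid : ∀ n, 1 ≤ n →
      μ.map (fun ω => (L n ω, R n ω)) = μ.map (fun ω => (L 1 ω, R 1 ω)))
    {γ : ℝ} (hint : Integrable (fun ω => L 1 ω ^ γ + R 1 ω ^ γ) μ) {n : ℕ} (hn : 1 ≤ n)
    (k : ℕ) :
    Integrable (fun ω ↦ (if I n ω = k then (1 : ℝ) else 0) * (L n ω ^ γ + R n ω ^ γ - 1)) μ := by
  have hX := ((identDistrib_coeff hLm hRm hiid γ hn).integrable_iff.mpr hint).sub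
    (integrable_const 1)
  refine hX.bdd_mul (c := 1) ?_ (ae_of_all _ fun ω ↦ ?_)
  · exact (measurable_index_indicator hIm n k).aestronglyMeasurable
  · split_ifs <;> simp

theorem integrable_increment_mul_rpow_kacWeight (hLm : ∀ n, Measurable (L n))
    (hRm : ∀ n, Measurable (R n)) (hIm : ∀ n, Measurable (I n))
    (hiid : ∀ n, 1 ≤ n →
      μ.map (fun ω => (L n ω, R n ω)) = μ.map (fun ω => (L 1 ω, R 1 ω)))
    (hindep : iIndepFun (kacFamily L R I) μ)
    {γ : ℝ} (hint : Integrable (fun ω => L 1 ω ^ γ + R 1 ω ^ γ) μ) {n : ℕ} (hn : 1 ≤ n)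
    {k : ℕ} (hW : Integrable (fun ω ↦ kacWeight L R I n k ω ^ γ) μ) :
    Integrable (fun ω ↦ (if I n ω = k then (1 : ℝ) else 0) * (L n ω ^ γ + R n ω ^ γ - 1) *
      kacWeight L R I n k ω ^ γ) μ :=
  (indepFun_increment_rpow_kacWeight hLm hRm hIm hindep γ n k k).integrable_mul
    (integrable_increment hLm hRm hIm hiid hint hn k) hW

theorem integral_increment_mul_rpow_kacWeight (hLm : ∀ n, Measurable (L n))
    (hRm : ∀ n, Measurable (R n)) (hIm : ∀ n, Measurable (I n))
    (hiid : ∀ n, 1 ≤ n →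
      μ.map (fun ω => (L n ω, R n ω)) = μ.map (fun ω => (L 1 ω, R 1 ω)))
    (hunif : ∀ n, 1 ≤ n → ∀ k ∈ Finset.Icc 1 n, μ {ω | I n ω = k} = (n : ENNReal)⁻¹)
    (hindep : iIndepFun (kacFamily L R I) μ)
    {γ : ℝ} (hint : Integrable (fun ω => L 1 ω ^ γ + R 1 ω ^ γ) μ) {n k : ℕ}
    (hk : k ∈ Icc 1 n) (hW : Integrable (fun ω ↦ kacWeight L R I n k ω ^ γ) μ) :
    ∫ ω, (if I n ω = k then (1 : ℝ) else 0) * (L n ω ^ γ + R n ω ^ γ - 1) *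
        kacWeight L R I n k ω ^ γ ∂μ =
      (n : ℝ)⁻¹ * ((∫ ω, (L 1 ω ^ γ + R 1 ω ^ γ) ∂μ) - 1) * ∫ ω, kacWeight L R I n k ω ^ γ ∂μ := by
  have hn : 1 ≤ n := (mem_Icc.mp hk).1.trans (mem_Icc.mp hk).2
  have hcoeff := identDistrib_coeff hLm hRm hiid γ hn
  have hX := hcoeff.integrable_iff.mpr hint
  have hsplit_weight :=
    (indepFun_increment_rpow_kacWeight hLm hRm hIm hindep γ n k k).integral_fun_mul_eq_mul_integral
      (integrable_increment hLm hRm hIm hiid hint hn k).aestronglyMeasurable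
      hW.aestronglyMeasurable
  have hsplit_index :=
    (indepFun_index_indicator_coeff hLm hRm hIm hindep γ n k).integral_fun_mul_eq_mul_integral
      (measurable_index_indicator hIm n k).aestronglyMeasurable
      (hX.sub (integrable_const 1)).aestronglyMeasurable
  rw [hsplit_weight, hsplit_index, integral_index_indicator hIm hunif hk,
    integral_sub hX (integrable_const 1), hcoeff.integral_eq]
  simp

theorem kacM_succ_ae_eq (hL : ∀ n ω, 0 ≤ L n ω) (hR : ∀ n ω, 0 ≤ R n ω)
    (hIm : ∀ n, Measurable (I n))
    (hunif : ∀ n, 1 ≤ n → ∀ k ∈ Finset.Icc 1 n, μ {ω | I n ω = k} = (n : ENNReal)⁻¹)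
    (γ : ℝ) {n : ℕ} (hn : 1 ≤ n) :
    kacM L R I γ (n + 1) =ᵐ[μ] fun ω ↦ kacM L R I γ n ω + ∑ k ∈ Icc 1 n,
      (if I n ω = k then (1 : ℝ) else 0) * (L n ω ^ γ + R n ω ^ γ - 1) *
        kacWeight L R I n k ω ^ γ := by
  filter_upwards [ae_index_mem_Icc hIm hunif hn] with ω hω
  simp only [kacM_succ_of_mem hL hR γ hω, ite_mul, one_mul, zero_mul, sum_ite_eq, if_pos hω]

theorem integrable_kacM (hL : ∀ n ω, 0 ≤ L n ω) (hR : ∀ n ω, 0 ≤ R n ω)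
    (hLm : ∀ n, Measurable (L n)) (hRm : ∀ n, Measurable (R n)) (hIm : ∀ n, Measurable (I n))
    (hiid : ∀ n, 1 ≤ n →
      μ.map (fun ω => (L n ω, R n ω)) = μ.map (fun ω => (L 1 ω, R 1 ω)))
    (hunif : ∀ n, 1 ≤ n → ∀ k ∈ Finset.Icc 1 n, μ {ω | I n ω = k} = (n : ENNReal)⁻¹)
    (hindep : iIndepFun (kacFamily L R I) μ)
    {γ : ℝ} (hint : Integrable (fun ω => L 1 ω ^ γ + R 1 ω ^ γ) μ) :
    ∀ n, Integrable (kacM L R I γ n) μ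
  | 0 => (integrable_zero Ω ℝ μ).congr (ae_of_all _ fun ω ↦ by simp [kacM])
  | 1 => (integrable_const 1).congr (ae_of_all _ fun ω ↦ (kacM_one γ ω).symm)
  | n + 2 => by
    have hM := integrable_kacM hL hR hLm hRm hIm hiid hunif hindep hint (n + 1)
    refine Integrable.congr ?_ (kacM_succ_ae_eq hL hR hIm hunif γ (by omega)).symm
    exact hM.add (integrable_finsetSum _ fun k hk ↦
      integrable_increment_mul_rpow_kacWeight hLm hRm hIm hiid hindep hint (by omega)
        (integrable_rpow_kacWeight hL hR hLm hRm hIm hM hk))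

theorem integral_kacM_succ (hL : ∀ n ω, 0 ≤ L n ω) (hR : ∀ n ω, 0 ≤ R n ω)
    (hLm : ∀ n, Measurable (L n)) (hRm : ∀ n, Measurable (R n)) (hIm : ∀ n, Measurable (I n))
    (hiid : ∀ n, 1 ≤ n →
      μ.map (fun ω => (L n ω, R n ω)) = μ.map (fun ω => (L 1 ω, R 1 ω)))
    (hunif : ∀ n, 1 ≤ n → ∀ k ∈ Finset.Icc 1 n, μ {ω | I n ω = k} = (n : ENNReal)⁻¹)
    (hindep : iIndepFun (kacFamily L R I) μ)
    {γ : ℝ} (hint : Integrable (fun ω => L 1 ω ^ γ + R 1 ω ^ γ) μ) {n : ℕ} (hn : 1 ≤ n) :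
    ∫ ω, kacM L R I γ (n + 1) ω ∂μ =
      (1 + ((∫ ω, (L 1 ω ^ γ + R 1 ω ^ γ) ∂μ) - 1) / n) * ∫ ω, kacM L R I γ n ω ∂μ := by
  have hM := integrable_kacM hL hR hLm hRm hIm hiid hunif hindep hint n
  have hW : ∀ k ∈ Icc 1 n, Integrable (fun ω ↦ kacWeight L R I n k ω ^ γ) μ :=
    fun k hk ↦ integrable_rpow_kacWeight hL hR hLm hRm hIm hM hk
  have hMsum : ∫ ω, kacM L R I γ n ω ∂μ = ∑ k ∈ Icc 1 n, ∫ ω, kacWeight L R I n k ω ^ γ ∂μ :=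
    integral_finsetSum _ hW
  have hinc := fun k (hk : k ∈ Icc 1 n) ↦
    integrable_increment_mul_rpow_kacWeight hLm hRm hIm hiid hindep hint hn (hW k hk)
  rw [integral_congr_ae (kacM_succ_ae_eq hL hR hIm hunif γ hn),
    integral_add hM (integrable_finsetSum _ hinc), integral_finsetSum _ hinc, sum_congr rfl fun k hk ↦
      integral_increment_mul_rpow_kacWeight hLm hRm hIm hiid hunif hindep hint hk (hW k hk),
    ← mul_sum, ← hMsum]
  ring

theorem tendsto_integral_kacM (hL : ∀ n ω, 0 ≤ L n ω) (hR : ∀ n ω, 0 ≤ R n ω)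
    (hLm : ∀ n, Measurable (L n)) (hRm : ∀ n, Measurable (R n)) (hIm : ∀ n, Measurable (I n))
    (hiid : ∀ n, 1 ≤ n →
      μ.map (fun ω => (L n ω, R n ω)) = μ.map (fun ω => (L 1 ω, R 1 ω)))
    (hunif : ∀ n, 1 ≤ n → ∀ k ∈ Finset.Icc 1 n, μ {ω | I n ω = k} = (n : ENNReal)⁻¹)
    (hindep : iIndepFun (kacFamily L R I) μ)
    {γ : ℝ} (hint : Integrable (fun ω => L 1 ω ^ γ + R 1 ω ^ γ) μ)
    (hSneg : (∫ ω, (L 1 ω ^ γ + R 1 ω ^ γ) ∂μ) < 1) :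
    Tendsto (fun n ↦ ∫ ω, kacM L R I γ n ω ∂μ) atTop (𝓝 0) := by
  refine (tendsto_add_atTop_iff_nat 1).mp
    (tendsto_zero_of_le_one_sub_div_mul (sub_pos.mpr hSneg)
      (fun k ↦ integral_nonneg (kacM_nonneg hL hR γ (k + 1))) fun k ↦ le_of_eq ?_)
  rw [integral_kacM_succ hL hR hLm hRm hIm hiid hunif hindep hint (by omega)]
  push_cast
  ring

theorem measureReal_exists_kacWeight_gt_le (hL : ∀ n ω, 0 ≤ L n ω) (hR : ∀ n ω, 0 ≤ R n ω)
    {γ : ℝ} (hγ : 0 < γ) {n : ℕ} (hM : Integrable (kacM L R I γ n) μ) {ε : ℝ} (hε : 0 < ε) :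
    μ.real {ω | ∃ j ∈ Icc 1 n, ε < kacWeight L R I n j ω} ≤
      (∫ ω, kacM L R I γ n ω ∂μ) / ε ^ γ := by
  have hsub : {ω | ∃ j ∈ Icc 1 n, ε < kacWeight L R I n j ω} ⊆
      {ω | ε ^ γ ≤ kacM L R I γ n ω} := by
    rintro ω ⟨j, hj, hεj⟩
    exact (Real.rpow_le_rpow hε.le hεj.le hγ.le).trans (rpow_kacWeight_le_kacM hL hR γ hj ω)
  rw [le_div_iff₀' (Real.rpow_pos_of_pos hε γ)]
  exact (mul_le_mul_of_nonneg_left (measureReal_mono hsub) (Real.rpow_pos_of_pos hε γ).le).trans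
    (mul_meas_ge_le_integral_of_nonneg (ae_of_all _ (kacM_nonneg hL hR γ n)) hM _)

end KacModel

theorem max_weight_tendsto_zero_in_probability {Ω : Type*} [MeasurableSpace Ω]
    (μ : Measure Ω) [IsProbabilityMeasure μ]
    (L R : ℕ → Ω → ℝ) (I : ℕ → Ω → ℕ)
    (hLmeas : ∀ n, Measurable (L n)) (hRmeas : ∀ n, Measurable (R n))
    (hImeas : ∀ n, Measurable (I n))
    (hLpos : ∀ n ω, 0 ≤ L n ω) (hRpos : ∀ n ω, 0 ≤ R n ω)
    (hiid : ∀ n, 1 ≤ n →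
      μ.map (fun ω => (L n ω, R n ω)) = μ.map (fun ω => (L 1 ω, R 1 ω)))
    (hunif : ∀ n, 1 ≤ n → ∀ k ∈ Finset.Icc 1 n, μ {ω | I n ω = k} = (n : ENNReal)⁻¹)
    (hindep : iIndepFun (kacFamily L R I) μ)
    (γ : ℝ) (hγ : 0 < γ)
    (hint : Integrable (fun ω => L 1 ω ^ γ + R 1 ω ^ γ) μ)
    (hSneg : (∫ ω, (L 1 ω ^ γ + R 1 ω ^ γ) ∂μ) < 1) :
    ∀ ε : ℝ, 0 < ε →
      Filter.Tendsto
        (fun n => μ {ω | ∃ j ∈ Finset.Icc 1 n, ε < kacWeight L R I n j ω})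
        Filter.atTop (nhds 0) := by
  intro ε hε
  have hmean := tendsto_integral_kacM hLpos hRpos hLmeas hRmeas hImeas hiid hunif hindep hint hSneg
  have hreal : Tendsto (fun n ↦ μ.real {ω | ∃ j ∈ Icc 1 n, ε < kacWeight L R I n j ω}) atTop
      (𝓝 0) :=
    squeeze_zero (fun n ↦ measureReal_nonneg)
      (fun n ↦ measureReal_exists_kacWeight_gt_le hLpos hRpos hγ
        (integrable_kacM hLpos hRpos hLmeas hRmeas hImeas hiid hunif hindep hint n) hε)
      (by simpa using hmean.div_const (ε ^ γ))
  exact (ENNReal.tendsto_toReal_iff (fun n ↦ measure_ne_top μ _) ENNReal.zero_ne_top).mp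
    (by rw [ENNReal.toReal_zero]; exact hreal)
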